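/- (Unlimited Sampling Theorem, identifiability form) Let Ω > 0, λ > 0, and let f, g : ℝ → ℝ be Ω-bandlimited. If the sampling interval T > 0 satisfies T ≤ 1/(2Ωe) and the modulo samples agree, i.e. 𝓜_λ(f(kT)) = 𝓜_λ(g(kT)) for all k ∈ ℤ, then f and g agree up to an additive constant in 2λℤ: there exists v ∈ ℤ such that f(t) = g(t) + 2λv for all t ∈ ℝ. -/

import Mathlib

open MeasureTheory

/-- `f : ℝ → ℝ` is `Ω`-bandlimited (`Ω` in rad/s): continuous, integrable and bounded,
with Fourier transform `𝓕f(ξ) = ∫ f(t) e^{−2πiξt} dt` vanishing for `|ξ| > Ω/(2π)`. -/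
def IsBandlimited (Ω : ℝ) (f : ℝ → ℝ) : Prop :=
  Continuous f ∧ Integrable f ∧ (∃ C : ℝ, ∀ t : ℝ, |f t| ≤ C) ∧
    ∀ ξ : ℝ, Ω / (2 * Real.pi) < |ξ| →
      FourierTransform.fourier (fun t : ℝ => (f t : ℂ)) ξ = 0

/-- The centered modulo map `𝓜_λ(r) = 2λ(⟦r/(2λ) + 1/2⟧ − 1/2)`. -/
noncomputable def centeredModulo (lam r : ℝ) : ℝ :=
  2 * lam * (Int.fract (r / (2 * lam) + 1 / 2) - 1 / 2)

/-!
The difference `d = f - g` is again bandlimited and its samples `d (k * T)` lie in `2λℤ`.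
Writing `d` as the inverse Fourier transform of its spectrum, the `N`-th forward difference with
step `T` multiplies the spectrum by `(e^{2πiξT} - 1)^N`, which is bounded by `(ΩT)^N` on the band.
As `ΩT < 1`, for large `N` the `N`-th differences of the samples are elements of `2λℤ` of absolute
value `< 2λ`, hence zero. A sequence on `ℤ` tending to `0` (Riemann–Lebesgue) whose `N`-th
difference vanishes is zero, so `d` vanishes on `Tℤ`. Since `ΩT < π`, the spectrum lives in one
period of the lattice `T⁻¹ℤ`; its periodization has Fourier coefficients `T • d (-n * T) = 0`,
so the spectrum and with it `d` vanish, and `v = 0`.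
-/

open Real Filter Topology FourierTransform fwdDiff

lemma sub_mem_zmultiples_of_centeredModulo_eq {lam x y : ℝ} (hlam : lam ≠ 0)
    (h : centeredModulo lam x = centeredModulo lam y) :
    x - y ∈ AddSubgroup.zmultiples (2 * lam) := by
  have hfract : Int.fract (x / (2 * lam) + 1 / 2) = Int.fract (y / (2 * lam) + 1 / 2) := by
    unfold centeredModulo at h
    have := mul_left_cancel₀ (by positivity) h
    linarith
  obtain ⟨m, hm⟩ := Int.fract_eq_fract.mp hfract
  refine ⟨m, ?_⟩
  field_simp at hm
  simp only [zsmul_eq_mul]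
  linarith

lemma eq_zero_of_mem_zmultiples_of_abs_lt {p x : ℝ} (hx : x ∈ AddSubgroup.zmultiples p)
    (h : |x| < |p|) : x = 0 := by
  obtain ⟨m, rfl⟩ := hx
  simp only [zsmul_eq_mul, abs_mul] at h
  have hm : |(m : ℝ)| < 1 :=
    (mul_lt_iff_lt_one_left (abs_pos.mpr fun hp => by simp [hp] at h)).mp h
  simp [Int.abs_lt_one_iff.mp (by exact_mod_cast hm)]

section fwdDiff

variable {M M' G G' : Type*} [AddCommMonoid M] [AddCommMonoid M'] [AddCommGroup G] [AddCommGroup G']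

lemma fwdDiff_iterate_mem {S : AddSubgroup G} {f : M → G} (hf : ∀ x, f x ∈ S) (h : M) (n : ℕ)
    (x : M) : (Δ_[h])^[n] f x ∈ S := by
  induction n generalizing x with
  | zero => exact hf x
  | succ n ih =>
    rw [Function.iterate_succ_apply']
    exact S.sub_mem (ih _) (ih _)

lemma fwdDiff_iterate_comp_addMonoidHom (φ : M →+ M') (f : M' → G) (h : M) (n : ℕ) :
    (Δ_[h])^[n] (f ∘ φ) = (Δ_[φ h])^[n] f ∘ φ := by
  ext x
  simp [fwdDiff_iter_eq_sum_shift, map_add, map_nsmul]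

lemma fwdDiff_iterate_addMonoidHom_comp (φ : G →+ G') (f : M → G) (h : M) (n : ℕ) :
    (Δ_[h])^[n] (φ ∘ f) = φ ∘ (Δ_[h])^[n] f := by
  ext x
  simp [fwdDiff_iter_eq_sum_shift, map_sum, map_zsmul]

lemma eq_zero_of_tendsto_of_fwdDiff_iterate_eq_zero [TopologicalSpace G] [IsTopologicalAddGroup G]
    [T2Space G] {u : ℤ → G} {n : ℕ} (hn : (Δ_[1])^[n] u = 0) (hu : Tendsto u atTop (𝓝 0)) :
    u = 0 := by
  induction n generalizing u with
  | zero => exact hn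
  | succ n ih =>
    have hdiff : Δ_[1] u = 0 := by
      refine ih hn ?_
      unfold fwdDiff
      simpa using (hu.comp (tendsto_atTop_add_const_right _ 1 tendsto_id)).sub hu
    have hper : Function.Periodic u 1 := fun k => sub_eq_zero.mp (congr_fun hdiff k)
    have hconst : u = fun _ => u 0 := funext fun k => by simpa using hper.zsmul_eq k
    rw [hconst] at hu ⊢
    ext
    exact tendsto_nhds_unique tendsto_const_nhds hu

end fwdDiff

lemma norm_fourierChar_sub_one_le (x : ℝ) : ‖(𝐞 x : ℂ) - 1‖ ≤ 2 * π * |x| := by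
  calc ‖(𝐞 x : ℂ) - 1‖ = ‖Complex.exp (Complex.I * ↑(2 * π * x)) - 1‖ := by
        rw [Real.fourierChar_apply, mul_comm]
    _ ≤ ‖2 * π * x‖ := norm_exp_I_mul_ofReal_sub_one_le
    _ = 2 * π * |x| := by rw [Real.norm_eq_abs, abs_mul, abs_of_pos two_pi_pos]

lemma integrable_fourierChar_smul {G : ℝ → ℂ} (hG : Integrable G) (t : ℝ) :
    Integrable fun ξ : ℝ => 𝐞 (ξ * t) • G ξ := by
  simpa [mul_comm t] using (Real.fourierIntegral_convergent_iff (-t)).2 hG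

lemma fwdDiff_fourierInv {G : ℝ → ℂ} (hG : Integrable G) (T : ℝ) :
    Δ_[T] (𝓕⁻ G) = 𝓕⁻ fun ξ => ((𝐞 (ξ * T) : ℂ) - 1) * G ξ := by
  ext t
  simp only [fwdDiff, Real.fourierInv_eq, Real.inner_apply]
  rw [← integral_sub (integrable_fourierChar_smul hG _) (integrable_fourierChar_smul hG _)]
  congr 1 with ξ
  rw [mul_add, AddChar.map_add_eq_mul]
  simp only [Circle.smul_def, Circle.coe_mul, smul_eq_mul]
  ring

lemma integrable_fourierChar_sub_one_pow_mul {G : ℝ → ℂ} (hG : Integrable G) (T : ℝ) (n : ℕ) :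
    Integrable fun ξ => ((𝐞 (ξ * T) : ℂ) - 1) ^ n * G ξ := by
  refine hG.bdd_mul (c := 2 ^ n) (by fun_prop) (Eventually.of_forall fun ξ => ?_)
  rw [norm_pow]
  refine pow_le_pow_left₀ (norm_nonneg _) ((norm_sub_le _ _).trans ?_) n
  simp only [Circle.norm_coe, norm_one]
  norm_num

lemma fwdDiff_iterate_fourierInv {G : ℝ → ℂ} (hG : Integrable G) (T : ℝ) (n : ℕ) :
    (Δ_[T])^[n] (𝓕⁻ G) = 𝓕⁻ fun ξ => ((𝐞 (ξ * T) : ℂ) - 1) ^ n * G ξ := by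
  induction n with
  | zero => simp
  | succ n ih =>
    rw [Function.iterate_succ_apply', ih,
      fwdDiff_fourierInv (integrable_fourierChar_sub_one_pow_mul hG T n)]
    simp only [pow_succ, mul_assoc, mul_left_comm]

lemma norm_fourierInv_le_integral_norm (G : ℝ → ℂ) (t : ℝ) : ‖𝓕⁻ G t‖ ≤ ∫ ξ, ‖G ξ‖ := by
  rw [Real.fourierInv_eq]
  refine (norm_integral_le_integral_norm _).trans_eq ?_
  simp_rw [Circle.norm_smul]

lemma norm_fwdDiff_iterate_fourierInv_le {G : ℝ → ℂ} (hG : Integrable G) {a T : ℝ} (hT : 0 ≤ T)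
    (hsupp : ∀ ξ, a < |ξ| → G ξ = 0) (n : ℕ) (t : ℝ) :
    ‖(Δ_[T])^[n] (𝓕⁻ G) t‖ ≤ (2 * π * a * T) ^ n * ∫ ξ, ‖G ξ‖ := by
  rw [fwdDiff_iterate_fourierInv hG]
  refine (norm_fourierInv_le_integral_norm _ t).trans ?_
  rw [← integral_const_mul]
  refine integral_mono_of_nonneg (Eventually.of_forall fun _ => norm_nonneg _)
    (hG.norm.const_mul _) (Eventually.of_forall fun ξ => ?_)
  by_cases hξ : a < |ξ|
  · simp [hsupp ξ hξ]
  have hmult : ‖(𝐞 (ξ * T) : ℂ) - 1‖ ≤ 2 * π * a * T := by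
    refine (norm_fourierChar_sub_one_le _).trans ?_
    rw [abs_mul, abs_of_nonneg hT, ← mul_assoc]
    gcongr
    exact le_of_not_gt hξ
  simp only [norm_mul, norm_pow]
  gcongr

lemma eq_zero_of_fourierCoeff_eq_zero {P : ℝ} [Fact (0 < P)] (F : C(AddCircle P, ℂ))
    (h : ∀ n, fourierCoeff F n = 0) : F = 0 := by
  have hc : fourierCoeff F = 0 := funext h
  have hF := hasSum_fourier_series_of_summable (f := F) (by rw [hc]; exact summable_zero)
  simp only [hc, Pi.zero_apply, zero_smul] at hF
  exact hF.unique hasSum_zero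

lemma fourierCoeff_liftIco_eq_smul_fourier {G : ℝ → ℂ} {P : ℝ} [Fact (0 < P)]
    (hsupp : ∀ ξ, P / 2 ≤ |ξ| → G ξ = 0) (n : ℤ) :
    fourierCoeff (AddCircle.liftIco P (-(P / 2)) G) n = P⁻¹ • 𝓕 G (n / P) := by
  have hP : 0 < P := Fact.out
  have hvanish : ∀ x ∉ Set.Ioc (-(P / 2)) (-(P / 2) + P),
      fourier (-n) (x : AddCircle (-(P / 2) + P - -(P / 2))) • G x = 0 := by
    intro x hx
    rw [hsupp x, smul_zero]
    rw [Set.mem_Ioc, show -(P / 2) + P = P / 2 by ring, not_and_or, not_lt, not_le] at hx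
    rcases hx with hx | hx
    · rw [abs_of_neg (by linarith)]; linarith
    · rw [abs_of_pos (by linarith)]; linarith
  rw [fourierCoeff_liftIco_eq, fourierCoeffOn_eq_integral,
    intervalIntegral.integral_of_le (by linarith),
    setIntegral_eq_integral_of_forall_compl_eq_zero hvanish, Real.fourier_real_eq_integral_exp_smul]
  congr 1
  · ring
  congr 1 with x
  rw [fourier_coe_apply]
  congr 2
  push_cast
  field_simp
  ring

lemma eq_zero_of_fourier_intCast_div_eq_zero {G : ℝ → ℂ} (hG : Continuous G) {P : ℝ} (hP : 0 < P)
    (hsupp : ∀ ξ, P / 2 ≤ |ξ| → G ξ = 0) (hzero : ∀ n : ℤ, 𝓕 G (n / P) = 0) : G = 0 := by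
  have : Fact (0 < P) := ⟨hP⟩
  have hend : G (-(P / 2)) = G (-(P / 2) + P) := by
    rw [hsupp _ (by rw [abs_neg, abs_of_pos (by positivity)]),
      hsupp _ (by rw [show -(P / 2) + P = P / 2 by ring, abs_of_pos (by positivity)])]
  let F : C(AddCircle P, ℂ) :=
    ⟨AddCircle.liftIco P (-(P / 2)) G, AddCircle.liftIco_continuous hend hG.continuousOn⟩
  have hF : F = 0 := eq_zero_of_fourierCoeff_eq_zero F fun n => by
    simp only [F, ContinuousMap.coe_mk, fourierCoeff_liftIco_eq_smul_fourier hsupp, hzero,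
      smul_zero]
  ext ξ
  by_cases hξ : |ξ| < P / 2
  · have hmem : ξ ∈ Set.Ico (-(P / 2)) (-(P / 2) + P) := by
      rw [show -(P / 2) + P = P / 2 by ring]
      exact ⟨by linarith [neg_abs_le ξ], by linarith [le_abs_self ξ]⟩
    rw [← AddCircle.liftIco_coe_apply (f := G) hmem]
    exact DFunLike.congr_fun hF (ξ : AddCircle P)
  · exact hsupp ξ (not_lt.mp hξ)

namespace IsBandlimited

variable {Ω : ℝ} {f g : ℝ → ℝ}

lemma sub (hf : IsBandlimited Ω f) (hg : IsBandlimited Ω g) : IsBandlimited Ω (f - g) := by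
  obtain ⟨hfc, hfi, ⟨Cf, hCf⟩, hfF⟩ := hf
  obtain ⟨hgc, hgi, ⟨Cg, hCg⟩, hgF⟩ := hg
  refine ⟨hfc.sub hgc, hfi.sub hgi,
    ⟨Cf + Cg, fun t => (abs_sub _ _).trans (add_le_add (hCf t) (hCg t))⟩, fun ξ hξ => ?_⟩
  have hlin : 𝓕 (fun t => ((f - g) t : ℂ)) ξ =
      𝓕 (fun t => (f t : ℂ)) ξ - 𝓕 (fun t => (g t : ℂ)) ξ := by
    simp only [Real.fourier_eq, Pi.sub_apply, Complex.ofReal_sub, smul_sub]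
    exact integral_sub ((Real.fourierIntegral_convergent_iff ξ).2 hfi.ofReal)
      ((Real.fourierIntegral_convergent_iff ξ).2 hgi.ofReal)
  rw [hlin, hfF ξ hξ, hgF ξ hξ, sub_zero]

lemma continuous_fourier (hf : IsBandlimited Ω f) : Continuous (𝓕 fun t => (f t : ℂ)) :=
  VectorFourier.fourierIntegral_continuous Real.continuous_fourierChar continuous_inner
    hf.2.1.ofReal

lemma integrable_fourier (hf : IsBandlimited Ω f) : Integrable (𝓕 fun t => (f t : ℂ)) := by
  refine hf.continuous_fourier.integrable_of_hasCompactSupport <|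
    HasCompactSupport.intro (isCompact_Icc (a := -(Ω / (2 * π))) (b := Ω / (2 * π))) fun ξ hξ => ?_
  rw [Set.mem_Icc, ← abs_le, not_le] at hξ
  exact hf.2.2.2 ξ hξ

lemma fourierInv_fourier (hf : IsBandlimited Ω f) :
    𝓕⁻ (𝓕 fun t => (f t : ℂ)) = fun t => (f t : ℂ) :=
  (Complex.continuous_ofReal.comp hf.1).fourierInv_fourier_eq hf.2.1.ofReal hf.integrable_fourier

lemma abs_fwdDiff_iterate_le (hf : IsBandlimited Ω f) {T : ℝ} (hT : 0 ≤ T) :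
    ∃ C, ∀ n t, |(Δ_[T])^[n] f t| ≤ (Ω * T) ^ n * C := by
  refine ⟨∫ ξ, ‖𝓕 (fun t => (f t : ℂ)) ξ‖, fun n t => ?_⟩
  have hcomplex : (Δ_[T])^[n] (fun t => (f t : ℂ)) t = (((Δ_[T])^[n] f t : ℝ) : ℂ) :=
    congr_fun (fwdDiff_iterate_addMonoidHom_comp Complex.ofRealHom.toAddMonoidHom f T n) t
  have hbound := norm_fwdDiff_iterate_fourierInv_le hf.integrable_fourier hT hf.2.2.2 n t
  rwa [hf.fourierInv_fourier, hcomplex, Complex.norm_real, Real.norm_eq_abs,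
    show 2 * π * (Ω / (2 * π)) * T = Ω * T by field_simp] at hbound

lemma zero_at_infty (hf : IsBandlimited Ω f) : Tendsto f (cocompact ℝ) (𝓝 0) := by
  have h := Real.zero_at_infty_fourier fun ξ => 𝓕 (fun t => (f t : ℂ)) (-ξ)
  rw [← Real.fourierInv_eq_fourier_comp_neg, hf.fourierInv_fourier, ← Complex.ofReal_zero] at h
  exact tendsto_ofReal_iff.mp h

lemma forall_intCast_mul_eq_zero_of_mem_zmultiples (hf : IsBandlimited Ω f) (hΩ : 0 ≤ Ω)
    {T p : ℝ} (hT : 0 < T) (hΩT : Ω * T < 1) (hp : p ≠ 0)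
    (hsamples : ∀ k : ℤ, f (k * T) ∈ AddSubgroup.zmultiples p) : ∀ k : ℤ, f (k * T) = 0 := by
  let φ : ℤ →+ ℝ := (AddMonoidHom.mulRight T).comp (Int.castAddHom ℝ)
  obtain ⟨C, hC⟩ := hf.abs_fwdDiff_iterate_le hT.le
  obtain ⟨N, hN⟩ : ∃ N : ℕ, (Ω * T) ^ N * C < |p| := by
    have := (tendsto_pow_atTop_nhds_zero_of_lt_one (by positivity) hΩT).mul_const C
    rw [zero_mul] at this
    exact (this.eventually (gt_mem_nhds (abs_pos.mpr hp))).exists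
  have hdiff : (Δ_[1])^[N] (f ∘ φ) = 0 := by
    ext k
    refine eq_zero_of_mem_zmultiples_of_abs_lt (fwdDiff_iterate_mem hsamples 1 N k) ?_
    have hφ : φ 1 = T := by simp [φ]
    rw [fwdDiff_iterate_comp_addMonoidHom, hφ, Function.comp_apply]
    exact (hC N _).trans_lt hN
  have hlim : Tendsto (f ∘ φ) atTop (𝓝 0) :=
    hf.zero_at_infty.comp <| (tendsto_intCast_atTop_atTop.atTop_mul_const hT).mono_right
      atTop_le_cocompact
  exact congr_fun (eq_zero_of_tendsto_of_fwdDiff_iterate_eq_zero hdiff hlim)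

lemma eq_zero_of_forall_intCast_mul_eq_zero (hf : IsBandlimited Ω f) {T : ℝ} (hT : 0 < T)
    (hΩT : Ω * T < π) (hzero : ∀ k : ℤ, f (k * T) = 0) : f = 0 := by
  have hsupp : ∀ ξ, T⁻¹ / 2 ≤ |ξ| → 𝓕 (fun t => (f t : ℂ)) ξ = 0 := by
    refine fun ξ hξ => hf.2.2.2 ξ (lt_of_lt_of_le ?_ hξ)
    rw [inv_div_left, ← one_div, div_lt_div_iff₀ (by positivity) (by positivity)]
    nlinarith
  have hsamples : ∀ n : ℤ, 𝓕 (𝓕 fun t => (f t : ℂ)) (n / T⁻¹) = 0 := by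
    intro n
    rw [div_inv_eq_mul, ← neg_neg ((n : ℝ) * T), ← Real.fourierInv_eq_fourier_neg,
      hf.fourierInv_fourier]
    simpa using hzero (-n)
  have hspectrum := eq_zero_of_fourier_intCast_div_eq_zero hf.continuous_fourier (inv_pos.mpr hT)
    hsupp hsamples
  ext t
  have ht := congr_fun hf.fourierInv_fourier t
  rw [hspectrum] at ht
  simpa [Real.fourierInv_eq] using ht.symm

end IsBandlimited

/-- Unlimited Sampling Theorem, identifiability form. -/
theorem unlimited_sampling_identifiability (Ω lam : ℝ) (hΩ : 0 < Ω) (hlam : 0 < lam)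
    (f g : ℝ → ℝ) (hf : IsBandlimited Ω f) (hg : IsBandlimited Ω g)
    (T : ℝ) (hT : 0 < T) (hTle : T ≤ 1 / (2 * Ω * Real.exp 1))
    (hsamples : ∀ k : ℤ, centeredModulo lam (f (k * T)) = centeredModulo lam (g (k * T))) :
    ∃ v : ℤ, ∀ t : ℝ, f t = g t + 2 * lam * v := by
  have hd := hf.sub hg
  have hΩT : Ω * T < 1 := by
    have he : 2 ≤ Real.exp 1 := by linarith [Real.add_one_le_exp 1]
    rw [le_div_iff₀ (by positivity)] at hTle
    nlinarith
  have hzero := hd.forall_intCast_mul_eq_zero_of_mem_zmultiples hΩ.le hT hΩT (by positivity)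
    fun k => sub_mem_zmultiples_of_centeredModulo_eq hlam.ne' (hsamples k)
  have hfg := hd.eq_zero_of_forall_intCast_mul_eq_zero hT (hΩT.trans (by linarith [pi_gt_three]))
    hzero
  exact ⟨0, fun t => by simpa [sub_eq_zero] using congr_fun hfg t⟩
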